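/- arXiv:1705.00340 — 5 statements merged into one kernel-verified Lean document; each statement's English description precedes it below -/
import Mathlib

section
/- The functional V(X) = 2·E(X) on L² is a coherent regret measure (satisfies B1–B5), but the functional R defined by R(X) = inf over y ∈ ℝ of { y + V(X − y) } is identically −∞; hence R is not a coherent risk measure. -/
/-!
`V` is the linear functional `X ↦ ((2 : ℝ) • p) ⬝ᵥ X` with nonnegative weights, so axioms (B1)–(B5) are
immediate. Its weights sum to `2 ≠ 1`, hence `V (X - y) = V X - 2 y` and the trade-off infimand
`y + V (X - y) = V X - y` is unbounded below in `y`.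
-/

open Matrix Set

theorem not_bddBelow_range_mul_add {a : ℝ} (ha : a ≠ 0) (b : ℝ) :
    ¬ BddBelow (range fun y : ℝ => a * y + b) := by
  have hsurj : Function.Surjective fun y : ℝ => a * y + b := fun z =>
    ⟨(z - b) / a, by field_simp; ring⟩
  rw [hsurj.range_eq]
  exact not_bddBelow_univ

section WeightedSum

variable {Ω : Type*} [Fintype Ω]

theorem dotProduct_convex_combination (w X X' : Ω → ℝ) (t : ℝ) :
    w ⬝ᵥ ((1 - t) • X + t • X') = (1 - t) * (w ⬝ᵥ X) + t * (w ⬝ᵥ X') := by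
  simp only [dotProduct_add, dotProduct_smul, smul_eq_mul]

theorem dotProduct_sub_const (w X : Ω → ℝ) (y : ℝ) :
    w ⬝ᵥ (fun ω => X ω - y) = w ⬝ᵥ X - (∑ ω, w ω) * y := by
  simp only [dotProduct, mul_sub, Finset.sum_sub_distrib, Finset.sum_mul]

theorem not_bddBelow_range_add_dotProduct_sub_const {w : Ω → ℝ} (hw : ∑ ω, w ω ≠ 1)
    (X : Ω → ℝ) : ¬ BddBelow (range fun y : ℝ => y + w ⬝ᵥ (fun ω => X ω - y)) := by
  have hinfimand : (fun y : ℝ => y + w ⬝ᵥ (fun ω => X ω - y)) =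
      fun y => (1 - ∑ ω, w ω) * y + w ⬝ᵥ X := by
    funext y
    rw [dotProduct_sub_const]
    ring
  rw [hinfimand]
  exact not_bddBelow_range_mul_add (sub_ne_zero.mpr hw.symm) _

end WeightedSum

/-- `V(X) = 2 E(X)` is a coherent regret measure, yet the trade-off formula
gives a functional identically `-∞` (the infimand is unbounded below). -/
theorem stmt2 {Ω : Type} [Fintype Ω] (p : Ω → ℝ) (hp : ∀ ω, 0 < p ω)
    (hsum : ∑ ω, p ω = 1) (V : (Ω → ℝ) → ℝ)
    (hV : ∀ X : Ω → ℝ, V X = 2 * ∑ ω, p ω * X ω) :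
    V 0 = 0 ∧
    (∀ X X' : Ω → ℝ, ∀ t : ℝ, 0 ≤ t → t ≤ 1 →
      V ((1 - t) • X + t • X') ≤ (1 - t) * V X + t * V X') ∧
    (∀ X X' : Ω → ℝ, (∀ ω, X ω ≤ X' ω) → V X ≤ V X') ∧
    LowerSemicontinuous V ∧
    (∀ X : Ω → ℝ, ∀ t : ℝ, 0 < t → V (t • X) = t * V X) ∧
    (∀ X : Ω → ℝ, ¬ BddBelow (Set.range fun y : ℝ => y + V (fun ω => X ω - y))) := by
  obtain rfl : V = fun X => ((2 : ℝ) • p) ⬝ᵥ X :=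
    funext fun X => by rw [hV, smul_dotProduct, smul_eq_mul]; rfl
  have hweights : 0 ≤ (2 : ℝ) • p := fun ω => by simpa using (hp ω).le
  have htotal : ∑ ω, ((2 : ℝ) • p) ω ≠ 1 := by
    simp only [Pi.smul_apply, ← Finset.smul_sum, hsum]
    norm_num
  refine ⟨dotProduct_zero _, fun X X' t _ _ => (dotProduct_convex_combination _ X X' t).le,
    fun X X' hle => dotProduct_le_dotProduct_of_nonneg_left hle hweights,
    (by fun_prop : Continuous _).lowerSemicontinuous,
    fun X t _ => dotProduct_smul t _ X,
    not_bddBelow_range_add_dotProduct_sub_const htotal⟩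
end

section
/- Let Q̃ ⊂ L² be nonempty, convex, compact, with every η ∈ Q̃ satisfying η ≥ 0. Define V(X) = sup over η ∈ Q̃ of E(Xη), and R(X) = sup over η ∈ Q̃ ∩ P of E(Xη), where P = { η ∈ L² : E(η)=1, η ≥ 0 }. Then for every X ∈ L², sup over η ∈ Q̃ ∩ P of E(Xη) equals inf over y ∈ ℝ of { y + V(X − y) }. -/
/-!
Push `Q̃` forward under `η ↦ (E η, E (X η))` to a compact convex set `A ⊆ ℝ²`. The left side is
then the largest `v` with `(1, v) ∈ A`, and `y + V (X - y)` is the Lagrangian dual function of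
this one-constraint problem. Weak duality is immediate. For strong duality, a line strictly
separating `(1, M + ε)` from `A` cannot be vertical because `A` meets the line `t = 1`, and its
slope is a multiplier `y` with `y + V (X - y) < M + ε`. If `A` misses the line `t = 1`, its
projection is an interval avoiding `1`, the dual function is unbounded below, and both sides are
`0` by the conventions for `sSup ∅` and unbounded `⨅`.
-/

open Set

theorem exists_mul_sub_le_neg_one_of_notMem {S : Set ℝ} (hclosed : IsClosed S)
    (hconv : Convex ℝ S) {a : ℝ} (ha : a ∉ S) : ∃ c : ℝ, ∀ s ∈ S, c * (a - s) ≤ -1 := by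
  obtain ⟨l, u, hlt, hgt⟩ := geometric_hahn_banach_closed_point hconv hclosed ha
  have hl : ∀ x, l x = x * l 1 := fun x => by simpa using l.map_smul x 1
  have hgap : 0 < a * l 1 - u := by rw [← hl]; linarith
  refine ⟨-l 1 / (a * l 1 - u), fun s hs => ?_⟩
  have hlt := hl s ▸ hlt s hs
  rw [div_mul_eq_mul_div, div_le_iff₀ hgap]
  linarith

namespace ConstrainedMax

variable {A : Set (ℝ × ℝ)}

/-- The Lagrangian dual function of maximizing `v` over `(t, v) ∈ A` subject to `t = 1`. -/
noncomputable def dualFunction (A : Set (ℝ × ℝ)) (y : ℝ) : ℝ :=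
  y + sSup ((fun q : ℝ × ℝ => q.2 - y * q.1) '' A)

theorem bddAbove_image_sub_mul (hA : IsCompact A) (y : ℝ) :
    BddAbove ((fun q : ℝ × ℝ => q.2 - y * q.1) '' A) :=
  (hA.image (by fun_prop)).bddAbove

theorem le_dualFunction (hA : IsCompact A) {v : ℝ} (hv : (1, v) ∈ A) (y : ℝ) :
    v ≤ dualFunction A y := by
  have := le_csSup (bddAbove_image_sub_mul hA y) (mem_image_of_mem _ hv)
  simp only at this
  unfold dualFunction
  linarith

theorem iInf_dualFunction_le (hA : IsCompact A) (hconv : Convex ℝ A)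
    (hfeas : (A ∩ {q | q.1 = 1}).Nonempty) :
    ⨅ y, dualFunction A y ≤ sSup (Prod.snd '' (A ∩ {q | q.1 = 1})) := by
  obtain ⟨⟨t₀, v₀⟩, hq₀, rfl : t₀ = 1⟩ := hfeas
  set M := sSup (Prod.snd '' (A ∩ {q | q.1 = 1}))
  have hbdd : BddAbove (Prod.snd '' (A ∩ {q | q.1 = 1})) :=
    ((hA.inter_right (isClosed_eq continuous_fst continuous_const)).image continuous_snd).bddAbove
  have hv₀ : v₀ ≤ M := le_csSup hbdd ⟨(1, v₀), ⟨hq₀, rfl⟩, rfl⟩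
  refine le_of_forall_pos_lt_add fun ε hε => ?_
  have hout : ((1 : ℝ), M + ε) ∉ A := fun h =>
    (le_csSup hbdd ⟨_, ⟨h, rfl⟩, rfl⟩ : M + ε ≤ M).not_gt (by linarith)
  obtain ⟨l, u, hlt, hgt⟩ := geometric_hahn_banach_closed_point hconv hA.isClosed hout
  set α := l (1, 0)
  set β := l (0, 1)
  have hl : ∀ q : ℝ × ℝ, l q = q.1 * α + q.2 * β := fun q => by
    conv_lhs => rw [show q = q.1 • ((1 : ℝ), (0 : ℝ)) + q.2 • ((0 : ℝ), (1 : ℝ)) by ext <;> simp]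
    rw [map_add, map_smul, map_smul, smul_eq_mul, smul_eq_mul]
  simp only [hl] at hlt hgt
  have hβ : 0 < β := by
    have := hlt _ hq₀
    simp only at this
    nlinarith
  have hbddBelow : BddBelow (range (dualFunction A)) :=
    ⟨v₀, forall_mem_range.2 (le_dualFunction hA hq₀)⟩
  -- the separating line `t α + v β = u` has slope `-α / β`
  refine (ciInf_le hbddBelow (-α / β)).trans_lt ?_
  have hsup : sSup ((fun q : ℝ × ℝ => q.2 - (-α / β) * q.1) '' A) ≤ u / β := by
    refine csSup_le ((nonempty_of_mem hq₀).image _) ?_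
    rintro _ ⟨q, hq, rfl⟩
    rw [le_div_iff₀ hβ]
    have := hlt q hq
    field_simp
    linarith
  calc dualFunction A (-α / β)
      ≤ -α / β + u / β := add_le_add_right hsup _
    _ < M + ε := by
      rw [← add_div, div_lt_iff₀ hβ]
      linarith

theorem not_bddBelow_range_dualFunction (hA : IsCompact A) (hconv : Convex ℝ A)
    (hinfeas : ∀ q ∈ A, q.1 ≠ 1) : ¬BddBelow (range (dualFunction A)) := by
  rintro ⟨m, hm⟩
  rcases A.eq_empty_or_nonempty with rfl | hne
  · have := hm ⟨m - 1, rfl⟩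
    norm_num [dualFunction] at this
  obtain ⟨c, hc⟩ := exists_mul_sub_le_neg_one_of_notMem (hA.image continuous_fst).isClosed
    (hconv.linear_image (LinearMap.fst ℝ ℝ ℝ)) (a := 1) fun ⟨q, hq, h⟩ => hinfeas q hq h
  obtain ⟨C, hC⟩ := (hA.image continuous_snd).bddAbove
  set t := |C - m| + 1
  have ht : 0 ≤ t := by positivity
  have hsup : sSup ((fun q : ℝ × ℝ => q.2 - t * c * q.1) '' A) ≤ C - t - t * c := by
    refine csSup_le (hne.image _) ?_
    rintro _ ⟨q, hq, rfl⟩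
    have h1 := hc q.1 (mem_image_of_mem _ hq)
    have h2 := hC (mem_image_of_mem _ hq)
    nlinarith
  have := hm ⟨t * c, rfl⟩
  have : C - m < t := by linarith [le_abs_self (C - m)]
  simp only [dualFunction] at *
  linarith

theorem sSup_snd_eq_iInf_dualFunction (hA : IsCompact A) (hconv : Convex ℝ A) :
    sSup (Prod.snd '' (A ∩ {q | q.1 = 1})) = ⨅ y, dualFunction A y := by
  by_cases hfeas : (A ∩ {q | q.1 = 1}).Nonempty
  · refine le_antisymm (le_ciInf fun y => csSup_le (hfeas.image _) ?_)
      (iInf_dualFunction_le hA hconv hfeas)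
    rintro _ ⟨⟨t, v⟩, ⟨hq, rfl : t = 1⟩, rfl⟩
    exact le_dualFunction hA hq y
  · rw [not_nonempty_iff_eq_empty.1 hfeas, image_empty, Real.sSup_empty,
      Real.iInf_of_not_bddBelow
        (not_bddBelow_range_dualFunction hA hconv fun q hq h => hfeas ⟨q, hq, h⟩)]

end ConstrainedMax

theorem sSup_image_inter_eq_iInf_add_sSup {E : Type*} [AddCommGroup E] [Module ℝ E]
    [TopologicalSpace E] {K : Set E} (hK : IsCompact K) (hconv : Convex ℝ K) (f g : E →ₗ[ℝ] ℝ)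
    (hf : Continuous f) (hg : Continuous g) :
    sSup (f '' (K ∩ {x | g x = 1})) = ⨅ y : ℝ, y + sSup ((fun x => f x - y * g x) '' K) := by
  have hfiber : f '' (K ∩ {x | g x = 1}) = Prod.snd '' (g.prod f '' K ∩ {q | q.1 = 1}) := by
    ext; simp [and_assoc]
  have hcompact : IsCompact (g.prod f '' K) := hK.image (hg.prodMk hf)
  rw [hfiber, ConstrainedMax.sSup_snd_eq_iInf_dualFunction hcompact (hconv.linear_image _)]
  simp [ConstrainedMax.dualFunction, image_image]

theorem stmt3_general {Ω : Type} [Fintype Ω] (p : Ω → ℝ)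
    (Qt : Set (Ω → ℝ)) (hconv : Convex ℝ Qt)
    (hcomp : IsCompact Qt) (hpos : ∀ η ∈ Qt, ∀ ω, 0 ≤ η ω)
    (P : Set (Ω → ℝ))
    (hP : P = {η | (∑ ω, p ω * η ω) = 1 ∧ ∀ ω, 0 ≤ η ω})
    (X : Ω → ℝ) :
    sSup ((fun η : Ω → ℝ => ∑ ω, p ω * (X ω * η ω)) '' (Qt ∩ P)) =
      ⨅ y : ℝ,
        (y + sSup ((fun η : Ω → ℝ => ∑ ω, p ω * ((X ω - y) * η ω)) '' Qt)) := by
  let expect (w : Ω → ℝ) : (Ω → ℝ) →ₗ[ℝ] ℝ := ∑ ω, w ω • LinearMap.proj ω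
  have hexpect : ∀ w η, expect w η = ∑ ω, w ω * η ω := by simp [expect]
  have hfiber : Qt ∩ P = Qt ∩ {η | expect p η = 1} := by
    ext η
    simp only [hP, hexpect, mem_inter_iff, mem_ofPred_eq]
    exact ⟨fun h => ⟨h.1, h.2.1⟩, fun h => ⟨h.1, h.2, hpos η h.1⟩⟩
  have hlagrangian : ∀ (y : ℝ) (η : Ω → ℝ),
      ∑ ω, p ω * ((X ω - y) * η ω) = expect (p * X) η - y * expect p η := by
    intro y η
    simp only [hexpect, Finset.mul_sum, ← Finset.sum_sub_distrib, Pi.mul_apply]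
    exact Finset.sum_congr rfl fun ω _ => by ring
  have hobjective : ∀ η : Ω → ℝ, ∑ ω, p ω * (X ω * η ω) = expect (p * X) η := by
    simpa using hlagrangian 0
  simp only [hfiber, hlagrangian, hobjective]
  exact sSup_image_inter_eq_iInf_add_sSup hcomp hconv _ _
    (LinearMap.continuous_of_finiteDimensional _) (LinearMap.continuous_of_finiteDimensional _)

/-- The minimax identity relating the regret envelope `Q̃` to the risk envelope
`Q̃ ∩ P`. -/
theorem stmt3 {Ω : Type} [Fintype Ω] (p : Ω → ℝ) (hp : ∀ ω, 0 < p ω)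
    (hsum : ∑ ω, p ω = 1)
    (Qt : Set (Ω → ℝ)) (hne : Qt.Nonempty) (hconv : Convex ℝ Qt)
    (hcomp : IsCompact Qt) (hpos : ∀ η ∈ Qt, ∀ ω, 0 ≤ η ω)
    (P : Set (Ω → ℝ))
    (hP : P = {η | (∑ ω, p ω * η ω) = 1 ∧ ∀ ω, 0 ≤ η ω})
    (X : Ω → ℝ) :
    sSup ((fun η : Ω → ℝ => ∑ ω, p ω * (X ω * η ω)) '' (Qt ∩ P)) =
      ⨅ y : ℝ,
        (y + sSup ((fun η : Ω → ℝ => ∑ ω, p ω * ((X ω - y) * η ω)) '' Qt)) :=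
  stmt3_general p Qt hconv hcomp hpos P hP X
end

section
/- Let R be a coherent risk measure with dual representation R(X) = sup over η ∈ Q of E(Xη) with Q ⊂ P nonempty closed convex, and let V be a coherent regret measure with dual representation V(X) = sup over η ∈ Q̃ of E(Xη) with Q̃ compact convex. Then R(X) = inf over y of { y + V(X − y) } for all X ∈ L² if and only if Q = Q̃ ∩ P, where P = { η : E(η)=1, η ≥ 0 }. -/
/-!
For fixed `X`, `inf_y {y + V(X - y)}` is a Lagrangian dual in the multiplier `y` of the
constraint `E[η] = 1`: as soon as `Q̃` meets that hyperplane it equals `sup_{Q̃ ∩ P} E[Xη]`.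
The nontrivial inequality comes from separating `(1, s + ε)`, where `s` is that constrained
supremum, from the compact convex image of `Q̃` under `η ↦ (E[η], E[Xη])` in `ℝ²`.
Conversely, testing the identity at `X = 1`, where `R(1) = 1`, forces `Q̃` to meet the
hyperplane; then `Q` and `Q̃ ∩ P` have the same support function, and since every linear
functional on `ℝ^Ω` is `E[X ·]`, Hahn–Banach separation makes these compact convex sets equal.
-/

open Set Filter

section Lagrange

variable {E : Type*} [AddCommGroup E] [Module ℝ E] [TopologicalSpace E]
  {K : Set E} (A e : E →L[ℝ] ℝ)

lemma sSup_image_inter_le_add_sSup_image_sub_mul (hK : IsCompact K)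
    (hT : (K ∩ {η | e η = 1}).Nonempty) (y : ℝ) :
    sSup (A '' (K ∩ {η | e η = 1})) ≤ y + sSup ((fun η => A η - y * e η) '' K) := by
  refine csSup_le (hT.image A) (forall_mem_image.2 fun η ⟨hηK, hηe⟩ => ?_)
  have := le_csSup (hK.image (by fun_prop : Continuous fun η => A η - y * e η)).bddAbove
    (mem_image_of_mem _ hηK)
  rw [show e η = 1 from hηe] at this
  linarith

lemma exists_add_sSup_image_sub_mul_le (hK : IsCompact K) (hKc : Convex ℝ K)
    (hT : (K ∩ {η | e η = 1}).Nonempty) {ε : ℝ} (hε : 0 < ε) :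
    ∃ y : ℝ, y + sSup ((fun η => A η - y * e η) '' K) ≤ sSup (A '' (K ∩ {η | e η = 1})) + ε := by
  set M := sSup (A '' (K ∩ {η | e η = 1}))
  have hAM : ∀ η ∈ K, e η = 1 → A η ≤ M := fun η hη he =>
    le_csSup ((hK.inter_right (isClosed_eq e.continuous continuous_const)).image
      A.continuous).bddAbove ⟨η, ⟨hη, he⟩, rfl⟩
  set Φ := e.prod A
  have hout : ((1 : ℝ), M + ε) ∉ Φ '' K := by
    rintro ⟨η, hη, hΦ⟩
    simp only [Φ, ContinuousLinearMap.prod_apply, Prod.mk.injEq] at hΦ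
    linarith [hAM η hη hΦ.1]
  obtain ⟨g, u, hgK, hgu⟩ := geometric_hahn_banach_closed_point
    (hKc.linear_image (Φ : E →ₗ[ℝ] ℝ × ℝ)) (hK.image Φ.continuous).isClosed hout
  set α := g (1, 0)
  set β := g (0, 1)
  have hg : ∀ a b : ℝ, g (a, b) = a * α + b * β := fun a b => by
    have : ((a, b) : ℝ × ℝ) = a • ((1 : ℝ), (0 : ℝ)) + b • ((0 : ℝ), (1 : ℝ)) := by simp
    rw [this, map_add, map_smul, map_smul, smul_eq_mul, smul_eq_mul]
  have hgK' : ∀ η ∈ K, e η * α + A η * β < u := fun η hη => hg (e η) (A η) ▸ hgK _ ⟨η, hη, rfl⟩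
  rw [hg, one_mul] at hgu
  obtain ⟨η₁, hη₁, he₁⟩ := hT
  have hβ : 0 < β := by
    have := hgK' η₁ hη₁
    rw [show e η₁ = 1 from he₁, one_mul] at this
    nlinarith [hAM η₁ hη₁ he₁]
  -- `y = -α / β` is the optimal multiplier read off the separating functional
  refine ⟨-(α / β), ?_⟩
  have hsup : sSup ((fun η => A η - -(α / β) * e η) '' K) ≤ M + ε + α / β := by
    refine csSup_le (Nonempty.image _ ⟨η₁, hη₁⟩) (forall_mem_image.2 fun η hη => ?_)
    rw [neg_mul, sub_neg_eq_add, div_mul_eq_mul_div, add_div' _ _ _ hβ.ne', add_div' _ _ _ hβ.ne',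
      div_le_div_iff_of_pos_right hβ]
    linarith [hgK' η hη]
  linarith

theorem iInf_add_sSup_image_sub_mul (hK : IsCompact K) (hKc : Convex ℝ K)
    (hT : (K ∩ {η | e η = 1}).Nonempty) :
    ⨅ y : ℝ, (y + sSup ((fun η => A η - y * e η) '' K)) = sSup (A '' (K ∩ {η | e η = 1})) := by
  have hle := sSup_image_inter_le_add_sSup_image_sub_mul A e hK hT
  refine le_antisymm (le_of_forall_pos_le_add fun ε hε => ?_) (le_ciInf hle)
  obtain ⟨y, hy⟩ := exists_add_sSup_image_sub_mul_le A e hK hKc hT hε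
  exact (ciInf_le ⟨_, forall_mem_range.2 hle⟩ y).trans hy

end Lagrange

theorem one_mem_of_bddBelow_range_add_sSup {I : Set ℝ} (hI : IsCompact I) (hIc : Convex ℝ I)
    (hIne : I.Nonempty)
    (hbdd : BddBelow (range fun y : ℝ => y + sSup ((fun t => (1 - y) * t) '' I))) :
    (1 : ℝ) ∈ I := by
  obtain ⟨c, hc⟩ := hbdd
  have hle : ∀ y m : ℝ, (∀ t ∈ I, (1 - y) * t ≤ (1 - y) * m) → c ≤ m + y * (1 - m) :=
    fun y m h => by
      have := csSup_le (hIne.image _) (forall_mem_image.2 h)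
      linarith [hc ⟨y, rfl⟩]
  have hsup : 1 ≤ sSup I := by
    by_contra! h
    have hlim : Tendsto (fun y => sSup I + y * (1 - sSup I)) atBot atBot :=
      tendsto_atBot_add_const_left _ _ (tendsto_id.atBot_mul_const (by linarith))
    obtain ⟨y, hyc, hy⟩ := ((hlim.eventually_lt_atBot c).and (eventually_le_atBot 1)).exists
    exact hyc.not_ge (hle y _ fun t ht =>
      mul_le_mul_of_nonneg_left (le_csSup hI.bddAbove ht) (by linarith))
  have hinf : sInf I ≤ 1 := by
    by_contra! h
    have hlim : Tendsto (fun y => sInf I + y * (1 - sInf I)) atTop atBot :=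
      tendsto_atBot_add_const_left _ _ (tendsto_id.atTop_mul_const_of_neg (by linarith))
    obtain ⟨y, hyc, hy⟩ := ((hlim.eventually_lt_atBot c).and (eventually_ge_atTop 1)).exists
    exact hyc.not_ge (hle y _ fun t ht =>
      mul_le_mul_of_nonpos_left (csInf_le hI.bddBelow ht) (by linarith))
  exact hIc.ordConnected.out (hI.sInf_mem hIne) (hI.sSup_mem hIne) ⟨hinf, hsup⟩

section Separation

variable {E : Type*} [TopologicalSpace E] [AddCommGroup E] [IsTopologicalAddGroup E] [Module ℝ E]
  [ContinuousSMul ℝ E] [LocallyConvexSpace ℝ E]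

theorem subset_of_forall_sSup_image_le {A B : Set E} (hA : IsCompact A) (hBc : Convex ℝ B)
    (hBcl : IsClosed B) (hBne : B.Nonempty)
    (h : ∀ f : StrongDual ℝ E, sSup (f '' A) ≤ sSup (f '' B)) :
    A ⊆ B := by
  intro x hx
  by_contra hxB
  obtain ⟨f, u, hfB, hfx⟩ := geometric_hahn_banach_closed_point hBc hBcl hxB
  have hA := le_csSup (hA.image f.continuous).bddAbove (mem_image_of_mem f hx)
  have hB := csSup_le (hBne.image f) (forall_mem_image.2 fun b hb => (hfB b hb).le)
  linarith [h f]

theorem eq_of_forall_sSup_image_eq [T2Space E] {A B : Set E} (hA : IsCompact A) (hAc : Convex ℝ A)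
    (hAne : A.Nonempty) (hB : IsCompact B) (hBc : Convex ℝ B) (hBne : B.Nonempty)
    (h : ∀ f : StrongDual ℝ E, sSup (f '' A) = sSup (f '' B)) : A = B :=
  (subset_of_forall_sSup_image_le hA hBc hB.isClosed hBne fun f => (h f).le).antisymm
    (subset_of_forall_sSup_image_le hB hAc hA.isClosed hAne fun f => (h f).ge)

end Separation

section Finite

variable {Ω : Type*} [Fintype Ω]

def weightedPairing (p X : Ω → ℝ) : StrongDual ℝ (Ω → ℝ) :=
  ∑ ω, (p ω * X ω) • ContinuousLinearMap.proj ω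

lemma coe_weightedPairing (p X : Ω → ℝ) :
    ⇑(weightedPairing p X) = fun η => ∑ ω, p ω * (X ω * η ω) := by
  ext η
  simp [weightedPairing, mul_assoc]

lemma weightedPairing_surjective {p : Ω → ℝ} (hp : ∀ ω, p ω ≠ 0) :
    Function.Surjective (weightedPairing p) := by
  classical
  intro f
  refine ⟨fun ω => f (Pi.single ω 1) / p ω, ContinuousLinearMap.coe_injective
    (LinearMap.pi_ext fun ω x => ?_)⟩
  have hx : (Pi.single ω x : Ω → ℝ) = x • Pi.single ω 1 := by
    rw [← Pi.single_smul', smul_eq_mul, mul_one]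
  simp only [ContinuousLinearMap.coe_coe, coe_weightedPairing]
  rw [Finset.sum_eq_single ω (fun b _ hb => by simp [hb]) (by simp), Pi.single_eq_same, hx,
    map_smul, smul_eq_mul]
  field_simp [hp ω]

def probDensities (p : Ω → ℝ) : Set (Ω → ℝ) := {η | ∑ ω, p ω * η ω = 1 ∧ ∀ ω, 0 ≤ η ω}

lemma convex_probDensities (p : Ω → ℝ) : Convex ℝ (probDensities p) := by
  simp only [probDensities, ofPred_and, ofPred_forall]
  refine (convex_hyperplane ⟨fun x y => ?_, fun c x => ?_⟩ 1).inter
    (convex_iInter fun ω => convex_halfSpace_ge (f := fun η : Ω → ℝ => η ω)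
      ⟨fun _ _ => rfl, fun _ _ => rfl⟩ 0)
  · simp [mul_add, Finset.sum_add_distrib]
  · simp [Finset.mul_sum, mul_left_comm]

lemma isClosed_probDensities (p : Ω → ℝ) : IsClosed (probDensities p) := by
  simp only [probDensities, ofPred_and, ofPred_forall]
  exact (isClosed_eq (by fun_prop) continuous_const).inter
    (isClosed_iInter fun ω => isClosed_le continuous_const (continuous_apply ω))

lemma isCompact_probDensities {p : Ω → ℝ} (hp : ∀ ω, 0 < p ω) : IsCompact (probDensities p) := by
  refine (isCompact_univ_pi fun ω => isCompact_Icc (a := 0) (b := 1 / p ω)).of_isClosed_subset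
    (isClosed_probDensities p) fun η ⟨h1, h0⟩ ω _ => ⟨h0 ω, ?_⟩
  rw [le_div_iff₀ (hp ω), mul_comm, ← h1]
  exact Finset.single_le_sum (fun i _ => mul_nonneg (hp i).le (h0 i)) (Finset.mem_univ ω)

theorem iInf_add_sSup_shift_eq_sSup_inter_probDensities {p : Ω → ℝ} (X : Ω → ℝ)
    {K : Set (Ω → ℝ)} (hK : IsCompact K) (hKc : Convex ℝ K) (hKpos : ∀ η ∈ K, ∀ ω, 0 ≤ η ω)
    (hT : (K ∩ probDensities p).Nonempty) :
    ⨅ y : ℝ, (y + sSup ((fun η => ∑ ω, p ω * ((X ω - y) * η ω)) '' K)) =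
      sSup ((fun η => ∑ ω, p ω * (X ω * η ω)) '' (K ∩ probDensities p)) := by
  have hKP : K ∩ probDensities p = K ∩ {η | weightedPairing p 1 η = 1} := by
    ext η
    simp only [probDensities, coe_weightedPairing, Pi.one_apply, one_mul, mem_inter_iff,
      mem_ofPred_eq]
    exact ⟨fun h => ⟨h.1, h.2.1⟩, fun h => ⟨h.1, h.2, hKpos η h.1⟩⟩
  have hshift : ∀ y : ℝ, (fun η => ∑ ω, p ω * ((X ω - y) * η ω)) =
      fun η => weightedPairing p X η - y * weightedPairing p 1 η := fun y => by
    ext η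
    simp only [coe_weightedPairing, Pi.one_apply, Finset.mul_sum, ← Finset.sum_sub_distrib]
    exact Finset.sum_congr rfl fun ω _ => by ring
  rw [← coe_weightedPairing, hKP]
  simp only [hshift]
  exact iInf_add_sSup_image_sub_mul _ _ hK hKc (hKP ▸ hT)

theorem inter_probDensities_nonempty_of_bddBelow {p : Ω → ℝ} {K : Set (Ω → ℝ)}
    (hKne : K.Nonempty) (hK : IsCompact K) (hKc : Convex ℝ K) (hKpos : ∀ η ∈ K, ∀ ω, 0 ≤ η ω)
    (hbdd : BddBelow (range fun y : ℝ => y + sSup ((fun η => ∑ ω, p ω * ((1 - y) * η ω)) '' K))) :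
    (K ∩ probDensities p).Nonempty := by
  set e := weightedPairing p 1
  have hscale : ∀ y : ℝ, (fun t => (1 - y) * t) '' (e '' K) =
      (fun η => ∑ ω, p ω * ((1 - y) * η ω)) '' K := fun y => by
    rw [image_image]
    refine image_congr' fun η => ?_
    simp only [e, coe_weightedPairing, Pi.one_apply, one_mul, Finset.mul_sum]
    exact Finset.sum_congr rfl fun ω _ => by ring
  obtain ⟨η, hη, he⟩ := one_mem_of_bddBelow_range_add_sSup (hK.image e.continuous)
    (hKc.linear_image (e : (Ω → ℝ) →ₗ[ℝ] ℝ)) (hKne.image e) (by simpa only [hscale] using hbdd)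
  refine ⟨η, hη, ?_, hKpos η hη⟩
  simpa [e, coe_weightedPairing] using he

end Finite

theorem stmt4_general {Ω : Type} [Fintype Ω] (p : Ω → ℝ) (hp : ∀ ω, 0 < p ω)
    (P : Set (Ω → ℝ))
    (hP : P = {η | (∑ ω, p ω * η ω) = 1 ∧ ∀ ω, 0 ≤ η ω})
    (Q : Set (Ω → ℝ)) (hQne : Q.Nonempty) (hQclosed : IsClosed Q)
    (hQconv : Convex ℝ Q) (hQP : Q ⊆ P)
    (Qt : Set (Ω → ℝ)) (hQtne : Qt.Nonempty) (hQtcomp : IsCompact Qt)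
    (hQtconv : Convex ℝ Qt) (hQtpos : ∀ η ∈ Qt, ∀ ω, 0 ≤ η ω)
    (R V : (Ω → ℝ) → ℝ)
    (hR : ∀ X : Ω → ℝ, R X = sSup ((fun η : Ω → ℝ => ∑ ω, p ω * (X ω * η ω)) '' Q))
    (hV : ∀ X : Ω → ℝ, V X = sSup ((fun η : Ω → ℝ => ∑ ω, p ω * (X ω * η ω)) '' Qt)) :
    (∀ X : Ω → ℝ, R X = ⨅ y : ℝ, (y + V (fun ω => X ω - y))) ↔ Q = Qt ∩ P := by
  change P = probDensities p at hP
  subst hP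
  have hdual : ∀ X : Ω → ℝ, (Qt ∩ probDensities p).Nonempty →
      ⨅ y : ℝ, (y + V fun ω => X ω - y) =
        sSup ((fun η => ∑ ω, p ω * (X ω * η ω)) '' (Qt ∩ probDensities p)) := fun X hT => by
    simp only [hV]
    exact iInf_add_sSup_shift_eq_sSup_inter_probDensities X hQtcomp hQtconv hQtpos hT
  constructor
  · intro H
    have hR1 : R (fun _ => 1) = 1 := by
      rw [hR]
      simp only [one_mul]
      rw [image_congr fun η hη => (hQP hη).1, hQne.image_const, csSup_singleton]
    have hT : (Qt ∩ probDensities p).Nonempty := by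
      refine inter_probDensities_nonempty_of_bddBelow hQtne hQtcomp hQtconv hQtpos ?_
      by_contra hbdd
      -- an infimum unbounded below is `0` in `ℝ`, whereas `R 1 = 1`
      have h1 := H fun _ => 1
      simp only [hR1, hV, Real.iInf_of_not_bddBelow hbdd] at h1
      exact one_ne_zero h1
    refine eq_of_forall_sSup_image_eq ((isCompact_probDensities hp).of_isClosed_subset hQclosed hQP)
      hQconv hQne (hQtcomp.inter_right (isClosed_probDensities p))
      (hQtconv.inter (convex_probDensities p)) hT fun f => ?_
    obtain ⟨X, rfl⟩ := weightedPairing_surjective (fun ω => (hp ω).ne') f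
    rw [coe_weightedPairing, ← hR, H, hdual X hT]
  · rintro rfl X
    rw [hR, hdual X hQne]

/-- `R(X) = inf_y { y + V(X - y) }` holds for all `X` iff the risk envelope is
`Q = Q̃ ∩ P`. -/
theorem stmt4 {Ω : Type} [Fintype Ω] (p : Ω → ℝ) (hp : ∀ ω, 0 < p ω)
    (hsum : ∑ ω, p ω = 1)
    (P : Set (Ω → ℝ))
    (hP : P = {η | (∑ ω, p ω * η ω) = 1 ∧ ∀ ω, 0 ≤ η ω})
    (Q : Set (Ω → ℝ)) (hQne : Q.Nonempty) (hQclosed : IsClosed Q)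
    (hQconv : Convex ℝ Q) (hQP : Q ⊆ P)
    (Qt : Set (Ω → ℝ)) (hQtne : Qt.Nonempty) (hQtcomp : IsCompact Qt)
    (hQtconv : Convex ℝ Qt) (hQtpos : ∀ η ∈ Qt, ∀ ω, 0 ≤ η ω)
    (R V : (Ω → ℝ) → ℝ)
    (hR : ∀ X : Ω → ℝ, R X = sSup ((fun η : Ω → ℝ => ∑ ω, p ω * (X ω * η ω)) '' Q))
    (hV : ∀ X : Ω → ℝ, V X = sSup ((fun η : Ω → ℝ => ∑ ω, p ω * (X ω * η ω)) '' Qt)) :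
    (∀ X : Ω → ℝ, R X = ⨅ y : ℝ, (y + V (fun ω => X ω - y))) ↔ Q = Qt ∩ P :=
  stmt4_general p hp P hP Q hQne hQclosed hQconv hQP Qt hQtne hQtcomp hQtconv hQtpos R V hR hV
end

section
/- For 0 ≤ α < 1 and X ∈ L² on a finite probability space, sup over η with 0 ≤ η ≤ 1/(1−α) and E(η)=1 of E(Xη) equals min over y ∈ ℝ of { y + (1/(1−α))·E((X − y)₊) } (the CVaR minimization formula), and the minimum is attained. -/
/-!
Weak duality is pointwise: for `0 ≤ η ≤ c` one has `(X - y) η ≤ c (X - y)₊`, so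
`E(Xη) = y E(η) + E((X - y) η) ≤ y + c E((X - y)₊)` for every `y`. Equality holds when
`η = c` on `{X > y}` and `η = 0` on `{X < y}`; such an `η` with `E(η) = 1` exists as soon as
`c P(X > y) ≤ 1 ≤ c P(X ≥ y)` (put the missing mass on `{X = y}`), i.e. when `y` is an upper
`(1 - α)`-quantile of `X`, and on a finite space that quantile is one of the values of `X`.
-/

open Finset

lemma mul_le_mul_max_zero {t η c : ℝ} (hη0 : 0 ≤ η) (hηc : η ≤ c) : t * η ≤ c * max t 0 := by
  rcases le_total t 0 with ht | ht
  · rw [max_eq_right ht, mul_zero]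
    exact mul_nonpos_of_nonpos_of_nonneg ht hη0
  · rw [max_eq_left ht, mul_comm c]
    exact mul_le_mul_of_nonneg_left hηc ht

lemma mul_eq_mul_max_zero {t η c : ℝ} (hpos : 0 < t → η = c) (hneg : t < 0 → η = 0) :
    t * η = c * max t 0 := by
  rcases lt_trichotomy t 0 with ht | rfl | ht
  · simp [hneg ht, max_eq_right ht.le]
  · simp
  · simp [hpos ht, max_eq_left ht.le, mul_comm]

section FiniteSpace

variable {Ω : Type*} [Fintype Ω] (p X : Ω → ℝ)

lemma sum_mul_mul_eq_add (η : Ω → ℝ) (y : ℝ) :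
    ∑ ω, p ω * (X ω * η ω) = y * ∑ ω, p ω * η ω + ∑ ω, p ω * ((X ω - y) * η ω) := by
  rw [mul_sum, ← sum_add_distrib]
  exact sum_congr rfl fun ω _ => by ring

lemma sum_mul_mul_le {η : Ω → ℝ} {c : ℝ} (hp : ∀ ω, 0 ≤ p ω)
    (hη : ∀ ω, 0 ≤ η ω ∧ η ω ≤ c) (hη1 : ∑ ω, p ω * η ω = 1) (y : ℝ) :
    ∑ ω, p ω * (X ω * η ω) ≤ y + c * ∑ ω, p ω * max (X ω - y) 0 := by
  rw [sum_mul_mul_eq_add p X η y, hη1, mul_one, mul_sum]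
  refine add_le_add_right (sum_le_sum fun ω _ => ?_) y
  rw [mul_left_comm c]
  exact mul_le_mul_of_nonneg_left (mul_le_mul_max_zero (hη ω).1 (hη ω).2) (hp ω)

lemma sum_mul_mul_eq {η : Ω → ℝ} {c : ℝ} (hη1 : ∑ ω, p ω * η ω = 1) (y : ℝ)
    (hpos : ∀ ω, y < X ω → η ω = c) (hneg : ∀ ω, X ω < y → η ω = 0) :
    ∑ ω, p ω * (X ω * η ω) = y + c * ∑ ω, p ω * max (X ω - y) 0 := by
  rw [sum_mul_mul_eq_add p X η y, hη1, mul_one, mul_sum]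
  congr 1
  refine sum_congr rfl fun ω _ => ?_
  rw [mul_eq_mul_max_zero (fun h => hpos ω (sub_pos.1 h)) (fun h => hneg ω (sub_neg.1 h)),
    mul_left_comm]

/-- An upper quantile: with `c = 1 / (1 - α)` this says `P(X > y) ≤ 1 - α ≤ P(X ≥ y)`. -/
lemma exists_mul_sum_lt_le_one_le_mul_sum_le {c : ℝ} (hc : 1 ≤ c * ∑ ω, p ω) :
    ∃ y, c * ∑ ω with y < X ω, p ω ≤ 1 ∧ 1 ≤ c * ∑ ω with y ≤ X ω, p ω := by
  have hΩ : (univ : Finset Ω).Nonempty := by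
    by_contra h
    rw [not_nonempty_iff_eq_empty.1 h, sum_empty, mul_zero] at hc
    linarith
  obtain ⟨ωmax, -, hmax⟩ := exists_max_image univ X hΩ
  have hS : {ω | c * ∑ ω' with X ω < X ω', p ω' ≤ 1}.toFinset.Nonempty := by
    refine ⟨ωmax, ?_⟩
    simp [filter_false_of_mem fun ω _ => not_lt.2 (hmax ω (mem_univ ω))]
  obtain ⟨ω₀, hω₀, hmin⟩ := exists_min_image _ X hS
  refine ⟨X ω₀, by simpa using hω₀, ?_⟩
  by_contra! hlt
  have hL : (univ.filter fun ω => X ω < X ω₀).Nonempty := by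
    by_contra hL
    rw [filter_true_of_mem fun ω _ => not_lt.1 fun h => hL ⟨ω, by simpa using h⟩] at hlt
    linarith
  obtain ⟨ω₁, hω₁, hω₁max⟩ := exists_max_image _ X hL
  rw [mem_filter] at hω₁
  -- There is no value of `X` strictly between `X ω₁` and `X ω₀`.
  have hgap : (univ.filter fun ω => X ω₁ < X ω) = univ.filter fun ω => X ω₀ ≤ X ω := by
    ext ω
    simp only [mem_filter, mem_univ, true_and]
    refine ⟨fun h => not_lt.1 fun h' => (hω₁max ω (by simpa using h')).not_gt h,
      fun h => hω₁.2.trans_le h⟩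
  exact hω₁.2.not_ge (hmin ω₁ (by simpa [hgap] using hlt.le))

lemma exists_density_sum_mul_mul_eq (hp : ∀ ω, 0 ≤ p ω) {c y : ℝ} (hc : 0 ≤ c)
    (hlt : c * ∑ ω with y < X ω, p ω ≤ 1) (hle : 1 ≤ c * ∑ ω with y ≤ X ω, p ω) :
    ∃ η : Ω → ℝ, (∀ ω, 0 ≤ η ω ∧ η ω ≤ c) ∧ ∑ ω, p ω * η ω = 1 ∧
      ∑ ω, p ω * (X ω * η ω) = y + c * ∑ ω, p ω * max (X ω - y) 0 := by
  set A := ∑ ω with y < X ω, p ω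
  set q := ∑ ω with X ω = y, p ω
  have hq : 0 ≤ q := sum_nonneg fun ω _ => hp ω
  have hsplit : ∑ ω with y ≤ X ω, p ω = A + q := by
    simp only [A, q, sum_filter, ← sum_add_distrib]
    refine sum_congr rfl fun ω _ => ?_
    rcases lt_trichotomy y (X ω) with h | h | h
    · simp [h, h.le, h.ne']
    · simp [h]
    · simp [h.ne, not_lt.2 h.le, not_le.2 h]
  rw [hsplit] at hle
  -- the mass missing on `{X > y}` goes on the atom `{X = y}`; if `q = 0` there is none missing
  set lam := (1 - c * A) / q
  have hlam : lam * q = 1 - c * A := by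
    rcases hq.eq_or_lt with h | h
    · rw [← h, add_zero] at hle
      rw [← h, mul_zero]
      linarith
    · exact div_mul_cancel₀ _ h.ne'
  have hlam0 : 0 ≤ lam := div_nonneg (by linarith) hq
  have hlamc : lam ≤ c := div_le_of_le_mul₀ hq hc (by linarith)
  set η : Ω → ℝ := fun ω => (if y < X ω then c else 0) + if X ω = y then lam else 0
  have hη : ∀ ω, 0 ≤ η ω ∧ η ω ≤ c := by
    intro ω
    rcases lt_trichotomy y (X ω) with h | h | h
    · simp [η, h, h.ne', hc]
    · simp [η, h, hlam0, hlamc]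
    · simp [η, h.ne, not_lt.2 h.le, hc]
  have hη1 : ∑ ω, p ω * η ω = 1 := by
    simp only [η, mul_add, mul_ite, mul_zero, sum_add_distrib, ← sum_filter, ← sum_mul]
    rw [mul_comm _ c, mul_comm _ lam, hlam]
    ring
  refine ⟨η, hη, hη1, sum_mul_mul_eq p X hη1 y (fun ω h => ?_) (fun ω h => ?_)⟩
  · simp [η, h, h.ne']
  · simp [η, h.ne, not_lt.2 h.le]

end FiniteSpace

/-- The CVaR minimization formula: the dual-representation value of `CVaR_α`
is the (attained) minimum of `y + (1/(1-α)) E((X-y)₊)`. -/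
theorem stmt6 {Ω : Type} [Fintype Ω] (p : Ω → ℝ) (hp : ∀ ω, 0 < p ω)
    (hsum : ∑ ω, p ω = 1) (α : ℝ) (hα0 : 0 ≤ α) (hα1 : α < 1) (X : Ω → ℝ) :
    IsLeast
      (Set.range fun y : ℝ => y + (1 / (1 - α)) * ∑ ω, p ω * max (X ω - y) 0)
      (sSup ((fun η : Ω → ℝ => ∑ ω, p ω * (X ω * η ω)) ''
        {η | (∀ ω, 0 ≤ η ω ∧ η ω ≤ 1 / (1 - α)) ∧ (∑ ω, p ω * η ω) = 1})) := by
  have hp0 : ∀ ω, 0 ≤ p ω := fun ω => (hp ω).le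
  have hc : 1 ≤ 1 / (1 - α) := by
    rw [le_div_iff₀ (sub_pos.2 hα1)]
    linarith
  obtain ⟨y, hlt, hle⟩ :=
    exists_mul_sum_lt_le_one_le_mul_sum_le p X (c := 1 / (1 - α)) (by rwa [hsum, mul_one])
  obtain ⟨η, hη, hη1, hηy⟩ :=
    exists_density_sum_mul_mul_eq p X hp0 (zero_le_one.trans hc) hlt hle
  set S := (fun η : Ω → ℝ => ∑ ω, p ω * (X ω * η ω)) ''
    {η | (∀ ω, 0 ≤ η ω ∧ η ω ≤ 1 / (1 - α)) ∧ (∑ ω, p ω * η ω) = 1}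
  have hub : ∀ s ∈ S, ∀ y', s ≤ y' + 1 / (1 - α) * ∑ ω, p ω * max (X ω - y') 0 := by
    rintro _ ⟨η', ⟨hη', hη'1⟩, rfl⟩ y'
    exact sum_mul_mul_le p X hp0 hη' hη'1 y'
  have hmem : y + 1 / (1 - α) * ∑ ω, p ω * max (X ω - y) 0 ∈ S := ⟨η, ⟨hη, hη1⟩, hηy⟩
  have hsup : sSup S = y + 1 / (1 - α) * ∑ ω, p ω * max (X ω - y) 0 :=
    le_antisymm (csSup_le ⟨_, hmem⟩ fun s hs => hub s hs y)
      (le_csSup ⟨_, fun s hs => hub s hs y⟩ hmem)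
  rw [hsup]
  exact ⟨⟨y, rfl⟩, by rintro _ ⟨y', rfl⟩; exact hub _ hmem y'⟩
end

section
/- Both V₁(X) = E(X₊) and V₂(X) = E(X) + E(X₊) satisfy inf over y ∈ ℝ of { y + Vᵢ(X − y) } = E(X) for every X ∈ L² on a finite probability space; hence two distinct coherent regret measures can generate the same risk measure via the trade-off formula. -/
/-!
Since the weights sum to one, `y + E(X - y) = E X` for every `y`. For `V₁`, the bound
`(X - y)₊ ≥ X - y` gives `y + E(X - y)₊ ≥ E X`, with equality at `y = min X`, where
`(X - y)₊ = X - y`. For `V₂`, `y + E(X - y) + E(X - y)₊ = E X + E(X - y)₊ ≥ E X`, with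
equality at `y = max X`, where `(X - y)₊ = 0`. The two regret measures already differ at
the constant `-1`.
-/

open Finset

section WeightedSums

variable {Ω : Type*} [Fintype Ω] {p : Ω → ℝ}

theorem nonempty_of_sum_eq_one (hsum : ∑ ω, p ω = 1) : Nonempty Ω :=
  univ_nonempty_iff.mp (nonempty_of_sum_ne_zero (hsum ▸ one_ne_zero))

theorem sum_mul_sub_const (hsum : ∑ ω, p ω = 1) (X : Ω → ℝ) (y : ℝ) :
    ∑ ω, p ω * (X ω - y) = ∑ ω, p ω * X ω - y := by
  simp only [mul_sub, sum_sub_distrib, ← sum_mul, hsum, one_mul]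

theorem sum_mul_le_sum_mul_max_zero (hp : ∀ ω, 0 ≤ p ω) (X : Ω → ℝ) :
    ∑ ω, p ω * X ω ≤ ∑ ω, p ω * max (X ω) 0 :=
  sum_le_sum fun ω _ => mul_le_mul_of_nonneg_left (le_max_left _ _) (hp ω)

theorem sum_mul_max_zero_nonneg (hp : ∀ ω, 0 ≤ p ω) (X : Ω → ℝ) :
    0 ≤ ∑ ω, p ω * max (X ω) 0 :=
  sum_nonneg fun ω _ => mul_nonneg (hp ω) (le_max_right _ _)

theorem isLeast_range_add_sum_mul_max_sub_zero (hp : ∀ ω, 0 ≤ p ω)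
    (hsum : ∑ ω, p ω = 1) (X : Ω → ℝ) :
    IsLeast (Set.range fun y : ℝ => y + ∑ ω, p ω * max (X ω - y) 0) (∑ ω, p ω * X ω) := by
  have := nonempty_of_sum_eq_one hsum
  obtain ⟨ω₀, hω₀⟩ := Finite.exists_min X
  refine ⟨⟨X ω₀, ?_⟩, ?_⟩
  · have hmax : ∀ ω, max (X ω - X ω₀) 0 = X ω - X ω₀ := fun ω =>
      max_eq_left (sub_nonneg.mpr (hω₀ ω))
    simp only [hmax, sum_mul_sub_const hsum]
    ring
  · rintro _ ⟨y, rfl⟩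
    have := sum_mul_le_sum_mul_max_zero hp (X · - y)
    rw [sum_mul_sub_const hsum] at this
    dsimp only
    linarith

theorem isLeast_range_add_sum_mul_sub_add_sum_mul_max_sub_zero (hp : ∀ ω, 0 ≤ p ω)
    (hsum : ∑ ω, p ω = 1) (X : Ω → ℝ) :
    IsLeast (Set.range fun y : ℝ =>
        y + ((∑ ω, p ω * (X ω - y)) + ∑ ω, p ω * max (X ω - y) 0))
      (∑ ω, p ω * X ω) := by
  have := nonempty_of_sum_eq_one hsum
  obtain ⟨ω₁, hω₁⟩ := Finite.exists_max X
  refine ⟨⟨X ω₁, ?_⟩, ?_⟩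
  · have hmax : ∀ ω, max (X ω - X ω₁) 0 = 0 := fun ω =>
      max_eq_right (sub_nonpos.mpr (hω₁ ω))
    simp only [hmax, mul_zero, sum_const_zero, sum_mul_sub_const hsum]
    ring
  · rintro _ ⟨y, rfl⟩
    have := sum_mul_max_zero_nonneg hp (X · - y)
    dsimp only
    rw [sum_mul_sub_const hsum]
    linarith

end WeightedSums

/-- Both `V₁(X) = E(X₊)` and `V₂(X) = E(X) + E(X₊)` generate the risk measure
`E(X)` via the trade-off formula, and `V₁ ≠ V₂`. -/
theorem stmt8 {Ω : Type} [Fintype Ω] (p : Ω → ℝ) (hp : ∀ ω, 0 < p ω)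
    (hsum : ∑ ω, p ω = 1) :
    (∀ X : Ω → ℝ,
      sInf (Set.range fun y : ℝ => y + ∑ ω, p ω * max (X ω - y) 0) =
        ∑ ω, p ω * X ω) ∧
    (∀ X : Ω → ℝ,
      sInf (Set.range fun y : ℝ =>
          y + ((∑ ω, p ω * (X ω - y)) + ∑ ω, p ω * max (X ω - y) 0)) =
        ∑ ω, p ω * X ω) ∧
    (fun X : Ω → ℝ => ∑ ω, p ω * max (X ω) 0) ≠
      (fun X : Ω → ℝ => (∑ ω, p ω * X ω) + ∑ ω, p ω * max (X ω) 0) := by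
  have hp₀ : ∀ ω, 0 ≤ p ω := fun ω => (hp ω).le
  refine ⟨fun X => (isLeast_range_add_sum_mul_max_sub_zero hp₀ hsum X).csInf_eq,
    fun X => (isLeast_range_add_sum_mul_sub_add_sum_mul_max_sub_zero hp₀ hsum X).csInf_eq,
    fun h => ?_⟩
  have h₁ := congrFun h fun _ => -1
  simp only [max_eq_right (by norm_num : (-1 : ℝ) ≤ 0), mul_zero, sum_const_zero,
    mul_neg_one, sum_neg_distrib, hsum] at h₁
  norm_num at h₁
end
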